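/- (Proposition 4.7, velocity Reynolds identity) Let L > 0, let v₀(t,x) = (L²e^{2Lt}/(2π)^{3/2})·(sin x₃, 0, 0) and Ξ₀(t,x) = (L²e^{2Lt}/(2π)³)·(sin x₃, cos x₃, 0), and define the matrix field M_v(t,x) = (2L³e^{2Lt}/(2π)^{3/2})·M(x₃), where M(x₃) is the 3×3 matrix whose (1,3) and (3,1) entries equal −cos x₃ and all other entries vanish. Then M_v(t,x) is symmetric and trace-free for every (t,x); moreover div(v₀ ⊗ v₀)(t,x) = 0 and div(Ξ₀ ⊗ Ξ₀)(t,x) = 0 for all (t,x), and ∂_t v₀ + div(v₀ ⊗ v₀ − Ξ₀ ⊗ Ξ₀) = div M_v everywhere. -/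

import Mathlib

open scoped Matrix

/-- Outer product of two vectors in ℝ³: `(u ⊗ w)ᵢⱼ = uᵢ wⱼ`. -/
def outer (u w : Fin 3 → ℝ) : Matrix (Fin 3) (Fin 3) ℝ := fun i j => u i * w j

/-- Divergence of a matrix-valued field: `(div M)ᵢ = ∑ⱼ ∂ⱼ Mᵢⱼ`. -/
noncomputable def divMat (M : (Fin 3 → ℝ) → Matrix (Fin 3) (Fin 3) ℝ)
    (x : Fin 3 → ℝ) (i : Fin 3) : ℝ :=
  ∑ j, fderiv ℝ (fun y => M y i j) x (Pi.single j 1)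

/-- The initial velocity field `v₀(t,x) = (L²e^{2Lt}/(2π)^{3/2})·(sin x₃, 0, 0)`. -/
noncomputable def v0 (L t : ℝ) (x : Fin 3 → ℝ) : Fin 3 → ℝ :=
  ![L ^ 2 * Real.exp (2 * L * t) / (2 * Real.pi) ^ ((3 : ℝ) / 2) * Real.sin (x 2), 0, 0]

/-- The initial magnetic field `Ξ₀(t,x) = (L²e^{2Lt}/(2π)³)·(sin x₃, cos x₃, 0)`. -/
noncomputable def Xi0 (L t : ℝ) (x : Fin 3 → ℝ) : Fin 3 → ℝ :=
  ![L ^ 2 * Real.exp (2 * L * t) / (2 * Real.pi) ^ (3 : ℕ) * Real.sin (x 2),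
    L ^ 2 * Real.exp (2 * L * t) / (2 * Real.pi) ^ (3 : ℕ) * Real.cos (x 2), 0]

/-- The explicit velocity Reynolds stress
`M_v(t,x) = (2L³e^{2Lt}/(2π)^{3/2})·M(x₃)` with `M(x₃)₁₃ = M(x₃)₃₁ = −cos x₃`, other entries 0. -/
noncomputable def Mv (L t : ℝ) (x : Fin 3 → ℝ) : Matrix (Fin 3) (Fin 3) ℝ :=
  (2 * L ^ 3 * Real.exp (2 * L * t) / (2 * Real.pi) ^ ((3 : ℝ) / 2)) •
    !![0, 0, -Real.cos (x 2); 0, 0, 0; -Real.cos (x 2), 0, 0]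

/-!
Every field in the statement depends on `x` only through `x₃` (the coordinate `x 2`), so its
divergence is the `x₃`-derivative of its third column. The fields `v₀` and `Ξ₀` are shear flows with vanishing third
component, hence the third columns of `v₀ ⊗ v₀` and `Ξ₀ ⊗ Ξ₀` vanish and both divergences are zero.
What remains is `∂ₜ v₀ = 2L v₀ = ∂₃ (M_v)_{·3}`, using `∂₃ (-cos x₃) = sin x₃`.
-/

theorem fderiv_comp_apply_eq_smul_deriv {𝕜 ι F : Type*} [NontriviallyNormedField 𝕜] [Fintype ι]
    [DecidableEq ι] [NormedAddCommGroup F] [NormedSpace 𝕜 F]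
    (f : 𝕜 → F) (k : ι) (x v : ι → 𝕜) :
    fderiv 𝕜 (fun y => f (y k)) x v = v k • deriv f (x k) := by
  by_cases hf : DifferentiableAt 𝕜 f (x k)
  · have h : HasFDerivAt (fun y : ι → 𝕜 => f (y k)) _ x :=
      hf.hasDerivAt.hasFDerivAt.comp x (hasFDerivAt_apply k x)
    rw [h.fderiv]
    simp
  · -- `f` is `y ↦ f (y k)` restricted to the line `s ↦ update x k s`, so both sides are junk `0`.
    have hg : ¬ DifferentiableAt 𝕜 (fun y : ι → 𝕜 => f (y k)) x := fun hg => hf <| by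
      rw [← Function.update_eq_self k x] at hg
      simpa [Function.comp_def] using hg.comp (x k) (hasDerivAt_update x k (x k)).differentiableAt
    rw [fderiv_zero_of_not_differentiableAt hg, deriv_zero_of_not_differentiableAt hf]
    simp

theorem divMat_eq_deriv_of_depends_on_x3 {M : (Fin 3 → ℝ) → Matrix (Fin 3) (Fin 3) ℝ}
    (hM : ∀ y, M y = M ![0, 0, y 2]) (x : Fin 3 → ℝ) (i : Fin 3) :
    divMat M x i = deriv (fun s => M ![0, 0, s] i 2) (x 2) := by
  have hM' (j : Fin 3) : (fun y => M y i j) = fun y => (fun s => M ![0, 0, s] i j) (y 2) := by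
    funext y; exact congrFun (congrFun (hM y) i) j
  have hj (j : Fin 3) : fderiv ℝ (fun y => M y i j) x (Pi.single j 1 : Fin 3 → ℝ) =
      (Pi.single j 1 : Fin 3 → ℝ) 2 • deriv (fun s => M ![0, 0, s] i j) (x 2) := by
    rw [hM' j]
    exact fderiv_comp_apply_eq_smul_deriv (fun s : ℝ => M ![0, 0, s] i j) 2 x _
  simp [divMat, hj, Fin.sum_univ_three]

theorem divMat_eq_zero_of_depends_on_x3 {M : (Fin 3 → ℝ) → Matrix (Fin 3) (Fin 3) ℝ}
    (hM : ∀ y, M y = M ![0, 0, y 2]) {i : Fin 3} (hMi : ∀ y, M y i 2 = 0) (x : Fin 3 → ℝ) :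
    divMat M x i = 0 := by
  simp [divMat_eq_deriv_of_depends_on_x3 hM, hMi]

theorem deriv_v0_time (L t : ℝ) (x : Fin 3 → ℝ) (i : Fin 3) :
    deriv (fun s => v0 L s x i) t = 2 * L * v0 L t x i := by
  have hexp : HasDerivAt (fun s => Real.exp (2 * L * s)) (Real.exp (2 * L * t) * (2 * L)) t := by
    simpa using ((hasDerivAt_id t).const_mul (2 * L)).exp
  fin_cases i
  · have h := ((hexp.const_mul (L ^ 2)).div_const ((2 * Real.pi) ^ ((3 : ℝ) / 2))).mul_const
      (Real.sin (x 2))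
    simp only [v0, Fin.zero_eta, Matrix.cons_val_zero]
    rw [h.deriv]
    ring
  all_goals simp [v0]

theorem divMat_Mv (L t : ℝ) (x : Fin 3 → ℝ) (i : Fin 3) :
    divMat (Mv L t) x i = 2 * L * v0 L t x i := by
  rw [divMat_eq_deriv_of_depends_on_x3 (fun _ => rfl)]
  fin_cases i
  · simp [Mv, v0]
    ring
  all_goals simp [Mv, v0]

theorem prop47_velocity_reynolds (L : ℝ) :
    (∀ (t : ℝ) (x : Fin 3 → ℝ), (Mv L t x)ᵀ = Mv L t x ∧ Matrix.trace (Mv L t x) = 0) ∧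
    (∀ (t : ℝ) (x : Fin 3 → ℝ) (i : Fin 3),
      divMat (fun y => outer (v0 L t y) (v0 L t y)) x i = 0) ∧
    (∀ (t : ℝ) (x : Fin 3 → ℝ) (i : Fin 3),
      divMat (fun y => outer (Xi0 L t y) (Xi0 L t y)) x i = 0) ∧
    (∀ (t : ℝ) (x : Fin 3 → ℝ) (i : Fin 3),
      deriv (fun s => v0 L s x i) t +
        divMat (fun y => outer (v0 L t y) (v0 L t y) - outer (Xi0 L t y) (Xi0 L t y)) x i =
      divMat (fun y => Mv L t y) x i) := by
  have hv0 (t : ℝ) (y : Fin 3 → ℝ) : v0 L t y 2 = 0 := rfl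
  have hXi0 (t : ℝ) (y : Fin 3 → ℝ) : Xi0 L t y 2 = 0 := rfl
  refine ⟨fun t x => ⟨?_, ?_⟩, fun t x i => ?_, fun t x i => ?_, fun t x i => ?_⟩
  · ext i j
    fin_cases i <;> fin_cases j <;> simp [Mv]
  · simp [Mv, Matrix.trace, Fin.sum_univ_three]
  · exact divMat_eq_zero_of_depends_on_x3 (fun _ => rfl) (fun y => by simp [outer, hv0]) x
  · exact divMat_eq_zero_of_depends_on_x3 (fun _ => rfl) (fun y => by simp [outer, hXi0]) x
  · rw [deriv_v0_time, divMat_Mv, divMat_eq_zero_of_depends_on_x3 (fun _ => rfl)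
      (fun y => by simp [outer, hv0, hXi0]) x, add_zero]
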